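/- For the γ = 0 case, the system of equations v = (ω − ω0)(d − r cot γ) degenerates; instead, the two-fold singularity conditions h = 0, h_x·f(x,0) = 0, h_x·f_λ(x,0) = 0 with h = r(ω0 − ω) admit the solution ω* = ω0, r* = κ, v* = (d(k2/m)(κ + r0) − dκω0^2 − (c1/m)ω0)/(d(c2/m) − 2κω0), provided d(c2/m) − 2κω0 ≠ 0; at this point, f(x*, +μ) = f(x*, −μ), i.e., the two limiting vector fields coincide whenever the coefficient of sign(h) in each component of f vanishes at x*. -/

import Mathlib

/-! At `r* = -κ` the `λ`-terms `λ·(d r) + d(κ λ)` and `λ r + κ λ` of `f` vanish, so `f(x*, λ)`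
does not depend on `λ`; this gives both the `h_x · f_λ` condition and `f(x*, μ) = f(x*, -μ)`.
Since `ω* = ω0`, the `h_x · f(x*, 0)` condition reduces to `ω̇ = 0` at `x*`, which is linear in `v`
and is solved by `v*`. -/

theorem lambda_terms_eq_zero_at_neg (d κ lam : ℝ) :
    lam * (d * -κ) + d * (κ * lam) = 0 ∧ lam * -κ + κ * lam = 0 :=
  ⟨by ring, by ring⟩

theorem omegaDot_eq_zero_at_vstar {d m k2 r0 κ c1 c2 ω0 : ℝ} (hm : m ≠ 0)
    (hden : d * (c2 / m) - 2 * κ * ω0 ≠ 0) :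
    let v := (d * (k2 / m) * (κ + r0) - d * κ * ω0 ^ 2 - (c1 / m) * ω0) /
      (d * (c2 / m) - 2 * κ * ω0)
    d * (k2 * (r0 - -κ) - c2 * v + m * -κ * ω0 ^ 2) - (c1 + 2 * m * -κ * v) * ω0 = 0 := by
  intro v
  have hv : (d * (c2 / m) - 2 * κ * ω0) * v =
      d * (k2 / m) * (κ + r0) - d * κ * ω0 ^ 2 - (c1 / m) * ω0 := mul_div_cancel₀ _ hden
  -- `ω̇` is `m` times the defining equation of `v*`
  calc d * (k2 * (r0 - -κ) - c2 * v + m * -κ * ω0 ^ 2) - (c1 + 2 * m * -κ * v) * ω0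
      = m * ((d * (k2 / m) * (κ + r0) - d * κ * ω0 ^ 2 - (c1 / m) * ω0)
          - (d * (c2 / m) - 2 * κ * ω0) * v) := by field_simp; ring
    _ = 0 := by rw [hv, sub_self, mul_zero]

/-- For `γ = 0` the two-fold singularity conditions `h = 0`,
`h_x · f(x,0) = 0`, `h_x · f_λ(x,0) = 0` with `h = r(ω0 - ω)` admit the
solution `ω* = ω0`, `r* = -κ`,
`v* = (d(k2/m)(κ + r0) - dκω0² - (c1/m)ω0)/(d(c2/m) - 2κω0)` (provided the
denominator is nonzero); and at this point the two limiting vector fields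
coincide, `f(x*, +μ) = f(x*, -μ)` for every `μ`, since the coefficient of
`sign(h)` in each component of `f` vanishes at `x*`. -/
theorem stmt_19 (d m β k2 r0 κ c1 c2 ω0 : ℝ) (hm : 0 < m)
    (hden : d * (c2 / m) - 2 * κ * ω0 ≠ 0) :
    -- the system for γ = 0 : f (r,v,ω) λ, affine in λ,
    -- with F = λ, M = κ λ, p2(r) = d r, p1 = k2 (r0 - r) - c2 v + m r ω²
    let f : ℝ × ℝ × ℝ → ℝ → ℝ × ℝ × ℝ := fun x lam =>
      let r := x.1; let v := x.2.1; let ω := x.2.2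
      let p1 := k2 * (r0 - r) - c2 * v + m * r * ω ^ 2
      ( m * (β ^ 2 + r ^ 2) * v,
        (β ^ 2 + d ^ 2 + r ^ 2) * p1 - d * (c1 + 2 * m * r * v) * ω
          + lam * (d * r) + d * (κ * lam),
        d * p1 - (c1 + 2 * m * r * v) * ω + lam * r + κ * lam )
    let h : ℝ × ℝ × ℝ → ℝ := fun x => x.1 * (ω0 - x.2.2)
    let rstar : ℝ := -κ
    let ωstar : ℝ := ω0
    let vstar : ℝ :=
      (d * (k2 / m) * (κ + r0) - d * κ * ω0 ^ 2 - (c1 / m) * ω0) /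
        (d * (c2 / m) - 2 * κ * ω0)
    let xstar : ℝ × ℝ × ℝ := (rstar, vstar, ωstar)
    -- h vanishes at x*
    h xstar = 0 ∧
    -- Lie derivative of h along f(·,0) vanishes at x*:
    --   ∇h·f = ṙ (ω0 - ω) - r ω̇
    ((f xstar 0).1 * (ω0 - ωstar) - rstar * (f xstar 0).2.2 = 0) ∧
    -- Lie derivative of h along f_λ vanishes at x* (λ-coefficient):
    (∀ lam : ℝ,
      (f xstar lam).1 * (ω0 - ωstar) - rstar * (f xstar lam).2.2 =
      (f xstar 0).1 * (ω0 - ωstar) - rstar * (f xstar 0).2.2) ∧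
    -- the two limiting vector fields coincide at x*
    (∀ μ : ℝ, f xstar μ = f xstar (-μ)) := by
  intro f h rstar ωstar vstar xstar
  have hconst (lam : ℝ) : f xstar lam = f xstar 0 := by
    obtain ⟨hv, hω⟩ := lambda_terms_eq_zero_at_neg d κ lam
    simp only [f, xstar, rstar, add_assoc, hv, hω, zero_mul, mul_zero, add_zero]
  refine ⟨by simp [h, xstar, ωstar], ?_, fun lam => by rw [hconst lam], fun μ => by rw [hconst μ, hconst (-μ)]⟩
  have hω : (f xstar 0).2.2 = 0 := by
    simpa [f, xstar, rstar, ωstar] using omegaDot_eq_zero_at_vstar (k2 := k2) (r0 := r0) hm.ne' hden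
  rw [hω, sub_self, mul_zero, mul_zero, sub_zero]
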